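/- Let s : [0,1] → ℝ be twice continuously differentiable. For positive integers D₁, D₂, consider the partition of [0,1] consisting of D₁ equal subintervals of [0,1/2] and D₂ equal subintervals of (1/2,1], and let s_m be the piecewise-constant function equal to the mean of s on each subinterval. Set α₁ = (1/48)∫₀^{1/2} s'(x)² dx and α₂ = (1/48)∫_{1/2}^1 s'(x)² dx. Then |∫₀¹ (s(x) − s_m(x))² dx − α₁/D₁² − α₂/D₂²| ≤ C·(D₁⁻³ + D₂⁻³), where C depends only on ‖s'‖_∞ and ‖s''‖_∞. -/

import Mathlib

/-!
On a bin `[a, b]` of width `h`, compare `s` with its tangent line `ℓ` at `a`: `|s - ℓ| ≤ M₂ h²`,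
and the squared deviation of `ℓ` from its own mean integrates to exactly `s'(a)² h³ / 12`.
Since the mean of a function minimises `c ↦ ∫ (f - c)²`, swapping the mean of `s` for that of
`ℓ` (or conversely) only moves the comparison in the favourable direction, so
`∫ (s - s̄)² = s'(a)² h³ / 12 + O(h⁴)`; moreover `h²/12 · ∫ s'² = s'(a)² h³ / 12 + O(h⁴)` because
`s'` varies by at most `M₂ h` on the bin. Summing the `O(h⁴)` errors over the `D` bins of width
`h = 1/(2D)` of each half of `[0, 1]` gives `O(D⁻³)`.
-/

open MeasureTheory Set

section Interval

variable {f g : ℝ → ℝ} {a b : ℝ}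

theorem integral_sq_sub_const (hf : Continuous f) (c : ℝ) :
    ∫ x in a..b, (f x - c) ^ 2
      = (∫ x in a..b, f x ^ 2) - 2 * c * (∫ x in a..b, f x) + c ^ 2 * (b - a) := by
  have hf2 : IntervalIntegrable (fun x => f x ^ 2) volume a b := (hf.pow 2).intervalIntegrable a b
  have hcf : IntervalIntegrable (fun x => 2 * c * f x) volume a b :=
    (continuous_const.mul hf).intervalIntegrable a b
  simp_rw [show ∀ x, (f x - c) ^ 2 = (f x ^ 2 - 2 * c * f x) + c ^ 2 from fun x => by ring]
  rw [intervalIntegral.integral_add (hf2.sub hcf) intervalIntegrable_const,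
    intervalIntegral.integral_sub hf2 hcf, intervalIntegral.integral_const_mul,
    intervalIntegral.integral_const, smul_eq_mul]
  ring

theorem integral_sq_sub_average_le (hf : Continuous f) (hab : a ≤ b) {μ : ℝ}
    (hμ : ∫ t in a..b, f t = μ * (b - a)) (c : ℝ) :
    ∫ x in a..b, (f x - μ) ^ 2 ≤ ∫ x in a..b, (f x - c) ^ 2 := by
  rw [integral_sq_sub_const hf, integral_sq_sub_const hf, hμ]
  nlinarith [mul_nonneg (sub_nonneg.2 hab) (sq_nonneg (c - μ))]

theorem abs_integral_sub_integral_le (hf : IntervalIntegrable f volume a b)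
    (hg : IntervalIntegrable g volume a b) (hab : a ≤ b) {B : ℝ}
    (hfg : ∀ x ∈ Icc a b, |f x - g x| ≤ B) :
    |(∫ x in a..b, f x) - ∫ x in a..b, g x| ≤ B * (b - a) := by
  rw [← intervalIntegral.integral_sub hf hg, ← Real.norm_eq_abs,
    ← abs_of_nonneg (sub_nonneg.2 hab)]
  refine intervalIntegral.norm_integral_le_of_norm_le_const fun x hx => ?_
  rw [uIoc_of_le hab] at hx
  exact hfg x (Ioc_subset_Icc_self hx)

theorem abs_integral_sq_sub_sub_integral_sq_sub_le (hf : Continuous f) (hg : Continuous g)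
    (hab : a ≤ b) {c ε δ : ℝ} (hfg : ∀ x ∈ Icc a b, |f x - g x| ≤ ε)
    (hgc : ∀ x ∈ Icc a b, |g x - c| ≤ δ) :
    |(∫ x in a..b, (f x - c) ^ 2) - ∫ x in a..b, (g x - c) ^ 2| ≤ ε * (ε + 2 * δ) * (b - a) := by
  have hε : 0 ≤ ε := (abs_nonneg _).trans (hfg a ⟨le_rfl, hab⟩)
  refine abs_integral_sub_integral_le (f := fun x => (f x - c) ^ 2) (g := fun x => (g x - c) ^ 2)
    (((hf.sub continuous_const).pow 2).intervalIntegrable _ _)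
    (((hg.sub continuous_const).pow 2).intervalIntegrable _ _) hab fun x hx => ?_
  rw [show (f x - c) ^ 2 - (g x - c) ^ 2 = (f x - g x) * ((f x - g x) + 2 * (g x - c)) by ring,
    abs_mul]
  have hsum : |(f x - g x) + 2 * (g x - c)| ≤ ε + 2 * δ := by
    refine (abs_add_le _ _).trans ?_
    rw [abs_mul, abs_two]
    linarith [hfg x hx, hgc x hx]
  exact mul_le_mul (hfg x hx) hsum (abs_nonneg _) hε

theorem abs_sub_le_mul_of_abs_deriv_le {f' : ℝ → ℝ} {M : ℝ}
    (hf : ∀ x ∈ Icc a b, HasDerivAt f (f' x) x) (hM : ∀ x ∈ Icc a b, |f' x| ≤ M) :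
    ∀ x ∈ Icc a b, |f x - f a| ≤ M * (x - a) := by
  simpa only [Real.norm_eq_abs] using norm_image_sub_le_of_norm_deriv_le_segment'
    (fun x hx => (hf x hx).hasDerivWithinAt) fun x hx => hM x (Ico_subset_Icc_self hx)

end Interval

section Bin

variable {s : ℝ → ℝ} {a b M₁ M₂ : ℝ}

theorem abs_deriv_sub_deriv_le (hs : ContDiff ℝ 2 s)
    (hM₂ : ∀ x ∈ Icc a b, |deriv (deriv s) x| ≤ M₂) :
    ∀ x ∈ Icc a b, |deriv s x - deriv s a| ≤ M₂ * (b - a) := by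
  intro x hx
  have hM₂0 : 0 ≤ M₂ := (abs_nonneg _).trans (hM₂ a ⟨le_rfl, hx.1.trans hx.2⟩)
  calc |deriv s x - deriv s a| ≤ M₂ * (x - a) :=
        abs_sub_le_mul_of_abs_deriv_le (fun y _ => (hs.differentiable_deriv_two y).hasDerivAt)
          hM₂ x hx
    _ ≤ M₂ * (b - a) := by gcongr; exact hx.2

theorem abs_sub_tangent_le (hs : ContDiff ℝ 2 s)
    (hM₂ : ∀ x ∈ Icc a b, |deriv (deriv s) x| ≤ M₂) :
    ∀ x ∈ Icc a b, |s x - (s a + deriv s a * (x - a))| ≤ M₂ * (b - a) ^ 2 := by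
  intro x hx
  have hM₂0 : 0 ≤ M₂ := (abs_nonneg _).trans (hM₂ a ⟨le_rfl, hx.1.trans hx.2⟩)
  have hderiv : ∀ y ∈ Icc a b, HasDerivAt (fun y => s y - (s a + deriv s a * (y - a)))
      (deriv s y - deriv s a) y := fun y _ =>
    ((hs.differentiable (by norm_num) y).hasDerivAt.sub
      ((((hasDerivAt_id' y).sub_const a).const_mul (deriv s a)).const_add (s a))).congr_deriv
      (by ring)
  have := abs_sub_le_mul_of_abs_deriv_le hderiv (abs_deriv_sub_deriv_le hs hM₂) x hx
  simp only [sub_self, mul_zero, add_zero, sub_zero] at this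
  calc _ ≤ M₂ * (b - a) * (x - a) := this
    _ ≤ M₂ * (b - a) * (b - a) :=
      mul_le_mul_of_nonneg_left (by linarith [hx.2]) (mul_nonneg hM₂0 (by linarith [hx.1, hx.2]))
    _ = M₂ * (b - a) ^ 2 := by ring

theorem integral_affine (c L : ℝ) :
    ∫ x in a..b, (c + L * (x - a)) = (c + L * (b - a) / 2) * (b - a) := by
  rw [intervalIntegral.integral_comp_sub_right (fun u => c + L * u), sub_self,
    intervalIntegral.integral_add (f := fun _ => c) (g := fun x => L * x) intervalIntegrable_const
      ((continuous_const.mul continuous_id).intervalIntegrable _ _),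
    intervalIntegral.integral_const_mul, integral_id, intervalIntegral.integral_const,
    smul_eq_mul]
  ring

theorem integral_sq_affine_sub_average (c L : ℝ) :
    ∫ x in a..b, (c + L * (x - a) - (c + L * (b - a) / 2)) ^ 2 = L ^ 2 * (b - a) ^ 3 / 12 := by
  simp_rw [show ∀ x, (c + L * (x - a) - (c + L * (b - a) / 2)) ^ 2
      = L ^ 2 * (x - (a + b) / 2) ^ 2 from fun x => by ring]
  rw [intervalIntegral.integral_const_mul,
    intervalIntegral.integral_comp_sub_right (fun u => u ^ 2), integral_pow]
  ring

theorem abs_average_sub_tangent_average_le (hs : ContDiff ℝ 2 s) (hab : a < b)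
    (hM₂ : ∀ x ∈ Icc a b, |deriv (deriv s) x| ≤ M₂) :
    |(b - a)⁻¹ * (∫ t in a..b, s t) - (s a + deriv s a * (b - a) / 2)| ≤ M₂ * (b - a) ^ 2 := by
  have hba : 0 < b - a := sub_pos.2 hab
  have hint := abs_integral_sub_integral_le (g := fun x => s a + deriv s a * (x - a))
    (hs.continuous.intervalIntegrable a b)
    ((by fun_prop : Continuous fun x => s a + deriv s a * (x - a)).intervalIntegrable a b)
    hab.le (abs_sub_tangent_le hs hM₂)
  rw [integral_affine] at hint
  rw [show (b - a)⁻¹ * (∫ t in a..b, s t) - (s a + deriv s a * (b - a) / 2)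
      = (b - a)⁻¹ * ((∫ t in a..b, s t) - (s a + deriv s a * (b - a) / 2) * (b - a)) by
    field_simp, abs_mul, abs_inv, abs_of_pos hba, inv_mul_le_iff₀ hba]
  linarith

theorem abs_integral_sq_deriv_sub_le (hs : ContDiff ℝ 2 s) (hab : a ≤ b)
    (hM₁ : ∀ x ∈ Icc a b, |deriv s x| ≤ M₁) (hM₂ : ∀ x ∈ Icc a b, |deriv (deriv s) x| ≤ M₂) :
    |(∫ x in a..b, deriv s x ^ 2) - deriv s a ^ 2 * (b - a)| ≤ 2 * M₁ * M₂ * (b - a) ^ 2 := by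
  have hM₂0 : 0 ≤ M₂ := (abs_nonneg _).trans (hM₂ a ⟨le_rfl, hab⟩)
  have h := abs_integral_sub_integral_le (f := fun x => deriv s x ^ 2) (g := fun _ => deriv s a ^ 2)
    (((hs.continuous_deriv (by norm_num)).pow 2).intervalIntegrable a b)
    intervalIntegrable_const hab (B := M₂ * (b - a) * (2 * M₁)) fun x hx => by
      rw [show deriv s x ^ 2 - deriv s a ^ 2
          = (deriv s x - deriv s a) * (deriv s x + deriv s a) by ring, abs_mul]
      refine mul_le_mul (abs_deriv_sub_deriv_le hs hM₂ x hx) ((abs_add_le _ _).trans ?_)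
        (abs_nonneg _) (by nlinarith [hx.1, hx.2])
      linarith [hM₁ x hx, hM₁ a ⟨le_rfl, hab⟩]
  rw [intervalIntegral.integral_const, smul_eq_mul, mul_comm (b - a)] at h
  linarith [h]

theorem abs_integral_sq_sub_average_sub_tangent_le (hs : ContDiff ℝ 2 s) (hab : a < b)
    (hM₁ : |deriv s a| ≤ M₁) (hM₂ : ∀ x ∈ Icc a b, |deriv (deriv s) x| ≤ M₂) :
    |(∫ x in a..b, (s x - (b - a)⁻¹ * ∫ t in a..b, s t) ^ 2) - deriv s a ^ 2 * (b - a) ^ 3 / 12|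
      ≤ (3 * M₂ ^ 2 * (b - a) + 2 * M₁ * M₂) * (b - a) ^ 4 := by
  have hM₁0 : 0 ≤ M₁ := (abs_nonneg _).trans hM₁
  have hμ := abs_average_sub_tangent_average_le hs hab hM₂
  have hsℓ := abs_sub_tangent_le hs hM₂
  set h := b - a with hh
  have hh0 : 0 < h := sub_pos.2 hab
  set L := deriv s a
  set ℓ : ℝ → ℝ := fun x => s a + L * (x - a)
  set μ := h⁻¹ * ∫ t in a..b, s t
  set μℓ := s a + L * h / 2
  have hℓc : Continuous ℓ := by fun_prop
  have hℓμℓ : ∀ x ∈ Icc a b, |ℓ x - μℓ| ≤ M₁ * h := fun x hx => by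
    rw [show ℓ x - μℓ = L * (x - a - h / 2) by ring, abs_mul]
    exact mul_le_mul hM₁ (abs_le.2 ⟨by linarith [hx.1], by linarith [hx.2]⟩) (abs_nonneg _) hM₁0
  have hℓμ : ∀ x ∈ Icc a b, |ℓ x - μ| ≤ M₁ * h + M₂ * h ^ 2 := fun x hx =>
    calc |ℓ x - μ| = |(ℓ x - μℓ) - (μ - μℓ)| := by ring_nf
      _ ≤ |ℓ x - μℓ| + |μ - μℓ| := abs_sub _ _
      _ ≤ M₁ * h + M₂ * h ^ 2 := add_le_add (hℓμℓ x hx) hμ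
  have hV : ∫ x in a..b, (ℓ x - μℓ) ^ 2 = L ^ 2 * h ^ 3 / 12 :=
    integral_sq_affine_sub_average _ _
  have hupper : ∫ x in a..b, (s x - μ) ^ 2 ≤ ∫ x in a..b, (s x - μℓ) ^ 2 :=
    integral_sq_sub_average_le hs.continuous hab.le (by rw [← hh]; simp only [μ]; field_simp) μℓ
  have hlower : ∫ x in a..b, (ℓ x - μℓ) ^ 2 ≤ ∫ x in a..b, (ℓ x - μ) ^ 2 :=
    integral_sq_sub_average_le hℓc hab.le (integral_affine (s a) L) μ
  have hpu := abs_integral_sq_sub_sub_integral_sq_sub_le hs.continuous hℓc hab.le hsℓ hℓμℓ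
  have hpl := abs_integral_sq_sub_sub_integral_sq_sub_le hs.continuous hℓc hab.le hsℓ hℓμ
  rw [← hh] at hpu hpl
  have hM₂h : 0 ≤ M₂ ^ 2 * h ^ 5 := by positivity
  rw [abs_le]
  constructor <;> nlinarith [(abs_le.1 hpu).2, (abs_le.1 hpl).1]

theorem abs_integral_sq_sub_average_sub_le (hs : ContDiff ℝ 2 s) (hab : a < b)
    (hM₁ : ∀ x ∈ Icc a b, |deriv s x| ≤ M₁)
    (hM₂ : ∀ x ∈ Icc a b, |deriv (deriv s) x| ≤ M₂) :
    |(∫ x in a..b, (s x - (b - a)⁻¹ * ∫ t in a..b, s t) ^ 2)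
        - (b - a) ^ 2 / 12 * ∫ x in a..b, deriv s x ^ 2|
      ≤ 3 * (M₂ ^ 2 * (b - a) + M₁ * M₂) * (b - a) ^ 4 := by
  have hM₁0 : 0 ≤ M₁ := (abs_nonneg _).trans (hM₁ a ⟨le_rfl, hab.le⟩)
  have hM₂0 : 0 ≤ M₂ := (abs_nonneg _).trans (hM₂ a ⟨le_rfl, hab.le⟩)
  have hvar := abs_integral_sq_sub_average_sub_tangent_le hs hab (hM₁ a ⟨le_rfl, hab.le⟩) hM₂
  have hRiemann : |(b - a) ^ 2 / 12 * (∫ x in a..b, deriv s x ^ 2)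
      - deriv s a ^ 2 * (b - a) ^ 3 / 12| ≤ M₁ * M₂ * (b - a) ^ 4 / 6 := by
    rw [show (b - a) ^ 2 / 12 * (∫ x in a..b, deriv s x ^ 2) - deriv s a ^ 2 * (b - a) ^ 3 / 12
        = (b - a) ^ 2 / 12 * ((∫ x in a..b, deriv s x ^ 2) - deriv s a ^ 2 * (b - a)) by ring,
      abs_mul, abs_of_nonneg (by positivity)]
    nlinarith [mul_le_mul_of_nonneg_left (abs_integral_sq_deriv_sub_le hs hab.le hM₁ hM₂)
      (by positivity : (0 : ℝ) ≤ (b - a) ^ 2 / 12)]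
  have hM₁M₂h : 0 ≤ M₁ * M₂ * (b - a) ^ 4 := by positivity
  rw [abs_le]
  constructor <;> linarith [(abs_le.1 hvar).1, (abs_le.1 hvar).2, (abs_le.1 hRiemann).1,
    (abs_le.1 hRiemann).2]

end Bin

theorem abs_integral_sq_sub_histogram_sub_le {s sm : ℝ → ℝ} {a h M₁ M₂ : ℝ} {D : ℕ}
    (hs : ContDiff ℝ 2 s) (hh : 0 < h)
    (hM₁ : ∀ x ∈ Icc a (a + D * h), |deriv s x| ≤ M₁)
    (hM₂ : ∀ x ∈ Icc a (a + D * h), |deriv (deriv s) x| ≤ M₂)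
    (hsm : ∀ k : ℕ, k < D → ∀ x ∈ Ico (a + k * h) (a + (k + 1) * h),
      sm x = h⁻¹ * ∫ t in (a + k * h)..(a + (k + 1) * h), s t) :
    IntervalIntegrable (fun x => (s x - sm x) ^ 2) volume a (a + D * h) ∧
    |(∫ x in a..(a + D * h), (s x - sm x) ^ 2)
        - h ^ 2 / 12 * ∫ x in a..(a + D * h), deriv s x ^ 2|
      ≤ D * (3 * (M₂ ^ 2 * h + M₁ * M₂) * h ^ 4) := by
  set x : ℕ → ℝ := fun k => a + k * h with hx
  have hxs : ∀ k : ℕ, x (k + 1) = a + (k + 1) * h := fun k => by simp only [hx]; push_cast; rfl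
  have hbin : ∀ k < D, IntervalIntegrable (fun y => (s y - sm y) ^ 2) volume (x k) (x (k + 1)) ∧
      |(∫ y in x k..x (k + 1), (s y - sm y) ^ 2)
          - h ^ 2 / 12 * ∫ y in x k..x (k + 1), deriv s y ^ 2|
        ≤ 3 * (M₂ ^ 2 * h + M₁ * M₂) * h ^ 4 := by
    intro k hk
    have hlen : x (k + 1) - x k = h := by rw [hxs]; ring
    have hlt : x k < x (k + 1) := by linarith
    have hsub : Icc (x k) (x (k + 1)) ⊆ Icc a (a + D * h) := by
      refine Icc_subset_Icc (le_add_of_nonneg_right (by positivity)) ?_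
      rw [hxs]
      gcongr
      exact_mod_cast hk
    have heq : EqOn (fun y => (s y - sm y) ^ 2)
        (fun y => (s y - (x (k + 1) - x k)⁻¹ * ∫ t in x k..x (k + 1), s t) ^ 2)
        (Ioo (x k) (x (k + 1))) := fun y hy => by
      have hy' : y ∈ Ico (a + k * h) (a + (k + 1) * h) := hxs k ▸ Ioo_subset_Ico_self hy
      show (s y - sm y) ^ 2 = _
      rw [hsm k hk y hy', hlen, hxs]
    refine ⟨(((hs.continuous.sub continuous_const).pow 2).intervalIntegrable _ _).congr_uIoo
      (uIoo_of_le hlt.le ▸ heq.symm), ?_⟩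
    rw [intervalIntegral.integral_congr_Ioo_of_le hlt.le heq]
    simpa only [hlen] using abs_integral_sq_sub_average_sub_le hs hlt
      (fun y hy => hM₁ y (hsub hy)) (fun y hy => hM₂ y (hsub hy))
  have hI := IntervalIntegrable.trans_iterate fun k hk => (hbin k hk).1
  have hsum := intervalIntegral.sum_integral_adjacent_intervals fun k hk => (hbin k hk).1
  have hsum' := intervalIntegral.sum_integral_adjacent_intervals (f := fun y => deriv s y ^ 2)
    (μ := volume) (a := x) (n := D) fun k _ =>
      ((hs.continuous_deriv (by norm_num)).pow 2).intervalIntegrable _ _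
  simp only [hx, Nat.cast_zero, zero_mul, add_zero] at hI hsum hsum'
  refine ⟨hI, ?_⟩
  rw [← hsum, ← hsum', Finset.mul_sum, ← Finset.sum_sub_distrib]
  calc _ ≤ ∑ k ∈ Finset.range D, |(∫ y in x k..x (k + 1), (s y - sm y) ^ 2)
          - h ^ 2 / 12 * ∫ y in x k..x (k + 1), deriv s y ^ 2| := Finset.abs_sum_le_sum_abs _ _
    _ ≤ ∑ _k ∈ Finset.range D, 3 * (M₂ ^ 2 * h + M₁ * M₂) * h ^ 4 :=
        Finset.sum_le_sum fun k hk => (hbin k (Finset.mem_range.1 hk)).2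
    _ = D * (3 * (M₂ ^ 2 * h + M₁ * M₂) * h ^ 4) := by
        rw [Finset.sum_const, Finset.card_range, nsmul_eq_mul]

theorem abs_integral_sq_sub_histogram_half_sub_le {s sm : ℝ → ℝ} {a M₁ M₂ : ℝ} {D : ℕ}
    (hs : ContDiff ℝ 2 s) (hD : 0 < D)
    (hM₁ : ∀ x ∈ Icc a (a + 1 / 2), |deriv s x| ≤ M₁)
    (hM₂ : ∀ x ∈ Icc a (a + 1 / 2), |deriv (deriv s) x| ≤ M₂)
    (hsm : ∀ k : ℕ, k < D → ∀ x ∈ Ico (a + (k : ℝ) / (2 * D)) (a + ((k : ℝ) + 1) / (2 * D)),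
      sm x = (2 * (D : ℝ)) * ∫ t in (a + (k : ℝ) / (2 * D))..(a + ((k : ℝ) + 1) / (2 * D)), s t) :
    IntervalIntegrable (fun x => (s x - sm x) ^ 2) volume a (a + 1 / 2) ∧
    |(∫ x in a..(a + 1 / 2), (s x - sm x) ^ 2)
        - ((1 / 48) * ∫ x in a..(a + 1 / 2), deriv s x ^ 2) / (D : ℝ) ^ 2|
      ≤ (M₂ ^ 2 + M₁ * M₂) * (D : ℝ) ^ (-3 : ℤ) := by
  have hM₁0 : 0 ≤ M₁ := (abs_nonneg _).trans (hM₁ a ⟨le_rfl, by linarith⟩)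
  have hM₂0 : 0 ≤ M₂ := (abs_nonneg _).trans (hM₂ a ⟨le_rfl, by linarith⟩)
  have hend : a + D * (2 * (D : ℝ))⁻¹ = a + 1 / 2 := by field_simp
  obtain ⟨hI, hE⟩ := abs_integral_sq_sub_histogram_sub_le (h := (2 * (D : ℝ))⁻¹) hs
    (by positivity) (hend ▸ hM₁) (hend ▸ hM₂)
    (by simpa only [← div_eq_mul_inv, inv_inv] using hsm)
  rw [hend] at hI hE
  refine ⟨hI, ?_⟩
  have hcoef : ((2 * (D : ℝ))⁻¹) ^ 2 / 12 * ∫ x in a..(a + 1 / 2), deriv s x ^ 2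
      = ((1 / 48) * ∫ x in a..(a + 1 / 2), deriv s x ^ 2) / (D : ℝ) ^ 2 := by
    field_simp; ring
  rw [hcoef] at hE
  refine hE.trans ?_
  rw [zpow_neg]
  have hbound : D * (3 * (M₂ ^ 2 * (2 * (D : ℝ))⁻¹ + M₁ * M₂) * ((2 * (D : ℝ))⁻¹) ^ 4)
      = 3 * (M₂ ^ 2 / (2 * D) + M₁ * M₂) / 16 * ((D : ℝ) ^ 3)⁻¹ := by
    field_simp
    ring
  rw [hbound]
  refine mul_le_mul_of_nonneg_right ?_ (by positivity)
  have : M₂ ^ 2 / (2 * D) ≤ M₂ ^ 2 / 2 := by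
    gcongr
    linarith [(Nat.one_le_cast.2 hD : (1 : ℝ) ≤ D)]
  nlinarith [sq_nonneg M₂, mul_nonneg hM₁0 hM₂0]

/-- Bias of the two-bin-size histogram (Claim "claim:bias").  If `s` is C² with
`|s'| ≤ M₁` and `|s''| ≤ M₂` on `[0,1]`, then there is a constant `C`
(depending only on `M₁` and `M₂`) such that for all positive `D₁, D₂` and any
function `sm` equal, on each bin of the partition of `[0,1]` into `D₁` equal
subintervals of `[0,1/2]` and `D₂` equal subintervals of `(1/2,1]`, to the mean
of `s` on that bin, one has
`|∫₀¹ (s − sm)² − α₁/D₁² − α₂/D₂²| ≤ C (D₁⁻³ + D₂⁻³)`,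
where `α₁ = (1/48)∫₀^{1/2} s'(x)² dx` and `α₂ = (1/48)∫_{1/2}^1 s'(x)² dx`. -/
theorem stmt_8 (s : ℝ → ℝ) (hs : ContDiff ℝ 2 s)
    (M₁ M₂ : ℝ)
    (hM₁ : ∀ x ∈ Set.Icc (0:ℝ) 1, |deriv s x| ≤ M₁)
    (hM₂ : ∀ x ∈ Set.Icc (0:ℝ) 1, |deriv (deriv s) x| ≤ M₂) :
    ∃ C : ℝ, 0 < C ∧
      ∀ (D₁ D₂ : ℕ), 0 < D₁ → 0 < D₂ →
      ∀ sm : ℝ → ℝ,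
        (∀ k : ℕ, k < D₁ →
          ∀ x ∈ Set.Ico ((k : ℝ) / (2 * D₁)) (((k : ℝ) + 1) / (2 * D₁)),
            sm x = (2 * (D₁ : ℝ)) *
              ∫ t in ((k : ℝ) / (2 * D₁))..(((k : ℝ) + 1) / (2 * D₁)), s t) →
        (∀ k : ℕ, k < D₂ →
          ∀ x ∈ Set.Ico (1/2 + (k : ℝ) / (2 * D₂)) (1/2 + ((k : ℝ) + 1) / (2 * D₂)),
            sm x = (2 * (D₂ : ℝ)) *
              ∫ t in (1/2 + (k : ℝ) / (2 * D₂))..(1/2 + ((k : ℝ) + 1) / (2 * D₂)), s t) →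
        |(∫ x in (0:ℝ)..1, (s x - sm x) ^ 2)
            - ((1/48) * ∫ x in (0:ℝ)..(1/2), (deriv s x) ^ 2) / (D₁ : ℝ) ^ 2
            - ((1/48) * ∫ x in (1/2:ℝ)..1, (deriv s x) ^ 2) / (D₂ : ℝ) ^ 2|
          ≤ C * ((D₁ : ℝ) ^ (-3 : ℤ) + (D₂ : ℝ) ^ (-3 : ℤ)) := by
  have hM₁0 : 0 ≤ M₁ := (abs_nonneg _).trans (hM₁ 0 ⟨le_rfl, zero_le_one⟩)
  have hM₂0 : 0 ≤ M₂ := (abs_nonneg _).trans (hM₂ 0 ⟨le_rfl, zero_le_one⟩)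
  refine ⟨M₂ ^ 2 + M₁ * M₂ + 1, by positivity, fun D₁ D₂ hD₁ hD₂ sm hsm₁ hsm₂ => ?_⟩
  obtain ⟨hI₁, hE₁⟩ := abs_integral_sq_sub_histogram_half_sub_le (a := 0) hs hD₁
    (fun x hx => hM₁ x ⟨hx.1, by linarith [hx.2]⟩) (fun x hx => hM₂ x ⟨hx.1, by linarith [hx.2]⟩)
    (by simpa only [zero_add] using hsm₁)
  obtain ⟨hI₂, hE₂⟩ := abs_integral_sq_sub_histogram_half_sub_le (a := 1 / 2) hs hD₂
    (fun x hx => hM₁ x ⟨by linarith [hx.1], by linarith [hx.2]⟩)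
    (fun x hx => hM₂ x ⟨by linarith [hx.1], by linarith [hx.2]⟩) hsm₂
  rw [zero_add] at hI₁ hE₁
  rw [show (1 / 2 : ℝ) + 1 / 2 = 1 by norm_num] at hI₂ hE₂
  rw [← intervalIntegral.integral_add_adjacent_intervals hI₁ hI₂]
  have hpos₁ : 0 ≤ (D₁ : ℝ) ^ (-3 : ℤ) := by positivity
  have hpos₂ : 0 ≤ (D₂ : ℝ) ^ (-3 : ℤ) := by positivity
  rw [sub_sub, ← sub_add_sub_comm]
  refine (abs_add_le _ _).trans ((add_le_add hE₁ hE₂).trans ?_)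
  nlinarith
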